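/- If the optimal solution (d*, z*) of the primal subproblem satisfies ‖d*‖_∞ < δ (i.e., the trust-region constraint is inactive), then every optimal solution (ω, γ) of the dual subproblem has γ = 0. -/

import Mathlib

/-!
For a dual optimum `(ω, γ)` let `d = -W (Gω + γ)`. Stationarity of the dual objective in the
direction of `γ` makes `d` a subgradient of `δ ‖·‖₁` at `γ`, i.e. `‖d‖_∞ ≤ δ` and `γᵀd = δ ‖γ‖₁`;
stationarity in `ω` along the edges of the simplex makes `(d, bᵀω + (Gω)ᵀd)` primal feasible, with
primal value equal to the dual value. Weak duality against `(d*, z*)` leaves the slack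
`∑ᵢ (δ - |d*ᵢ|) |γᵢ|`, so the optimality of `(d*, z*)` forces this slack to vanish, and every
`δ - |d*ᵢ|` is positive.
-/

open Matrix

/-- Objective of the dual subproblem. -/
noncomputable def dualObj (n m : ℕ) (G : Matrix (Fin n) (Fin m) ℝ) (b : Fin m → ℝ)
    (W : Matrix (Fin n) (Fin n) ℝ) (δ : ℝ) (ω : Fin m → ℝ) (γ : Fin n → ℝ) : ℝ :=
  -(1 / 2) * ((G *ᵥ ω + γ) ⬝ᵥ W *ᵥ (G *ᵥ ω + γ)) + b ⬝ᵥ ω - δ * ∑ i, |γ i|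

/-- Feasibility for the dual subproblem: `𝟙ᵀω = 1` and `ω ≥ 0`. -/
def dualFeas (m : ℕ) (ω : Fin m → ℝ) : Prop :=
  ∑ j, ω j = 1 ∧ ∀ j, 0 ≤ ω j

/-- Feasibility for the primal subproblem: `‖d‖_∞ ≤ δ` and `b_j + g_jᵀd ≤ z` for all `j`. -/
def primalFeas (n m : ℕ) (G : Matrix (Fin n) (Fin m) ℝ) (b : Fin m → ℝ) (δ : ℝ)
    (d : Fin n → ℝ) (z : ℝ) : Prop :=
  (∀ i, |d i| ≤ δ) ∧ ∀ j, b j + (fun i => G i j) ⬝ᵥ d ≤ z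

/-- Objective of the primal subproblem. -/
noncomputable def primalObj (n : ℕ) (H : Matrix (Fin n) (Fin n) ℝ)
    (d : Fin n → ℝ) (z : ℝ) : ℝ :=
  z + (1 / 2) * (d ⬝ᵥ H *ᵥ d)

open Filter Topology

theorem nonpos_of_eventually_mul_le_sq {a B : ℝ} (h : ∀ᶠ t in 𝓝[>] 0, t * a ≤ t ^ 2 * B) :
    a ≤ 0 := by
  have hlim : Tendsto (fun t : ℝ => t * B) (𝓝[>] 0) (𝓝 0) := by
    simpa using ((continuous_mul_const B).tendsto 0).mono_left nhdsWithin_le_nhds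
  refine ge_of_tendsto hlim ?_
  filter_upwards [h, self_mem_nhdsWithin] with t ht (htpos : 0 < t)
  exact le_of_mul_le_mul_left (by linarith) htpos

/-- The hypothesis says that `t ↦ δ |x + t| - t s` is minimal at `0` up to `O(t²)`; the conclusion
says that `s` is a subgradient of `δ |·|` at `x`. -/
theorem abs_le_and_mul_eq_of_forall_mul_sub_le_sq {x s δ C : ℝ} (hδ : 0 ≤ δ)
    (h : ∀ t, t * s - δ * (|x + t| - |x|) ≤ t ^ 2 * C) : |s| ≤ δ ∧ x * s = δ * |x| := by
  have hup : s - δ ≤ 0 := nonpos_of_eventually_mul_le_sq (B := C) <| by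
    filter_upwards [self_mem_nhdsWithin] with t (ht : 0 < t)
    have hx : |x + t| - |x| ≤ t := by linarith [abs_add_le x t, abs_of_pos ht]
    nlinarith [h t]
  have hdown : -s - δ ≤ 0 := nonpos_of_eventually_mul_le_sq (B := C) <| by
    filter_upwards [self_mem_nhdsWithin] with t (ht : 0 < t)
    have hx : |x + -t| - |x| ≤ t := by linarith [abs_add_le x (-t), abs_neg t, abs_of_pos ht]
    nlinarith [h (-t)]
  have habs : |s| ≤ δ := abs_le.2 ⟨by linarith, by linarith⟩
  have hge : δ * |x| - x * s ≤ 0 := nonpos_of_eventually_mul_le_sq (B := x ^ 2 * C) <| by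
    filter_upwards [Ioo_mem_nhdsGT one_pos] with t ⟨ht0, ht1⟩
    have hx : |x + -t * x| - |x| = -t * |x| := by
      rw [show x + -t * x = (1 - t) * x by ring, abs_mul, abs_of_pos (by linarith : 0 < 1 - t)]
      ring
    have := h (-t * x)
    rw [hx] at this
    linarith
  refine ⟨habs, le_antisymm ?_ (by linarith)⟩
  calc x * s ≤ |x| * |s| := by rw [← abs_mul]; exact le_abs_self _
    _ ≤ δ * |x| := by rw [mul_comm]; exact mul_le_mul_of_nonneg_right habs (abs_nonneg x)

theorem Matrix.IsSymm.dotProduct_mulVec_comm {ι R : Type*} [Fintype ι] [CommSemiring R]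
    {W : Matrix ι ι R} (hW : W.IsSymm) (u v : ι → R) : u ⬝ᵥ W *ᵥ v = v ⬝ᵥ W *ᵥ u := by
  rw [dotProduct_mulVec, ← mulVec_transpose, hW.eq, dotProduct_comm]

theorem Matrix.IsSymm.dotProduct_mulVec_add_smul {ι R : Type*} [Fintype ι] [CommRing R]
    {W : Matrix ι ι R} (hW : W.IsSymm) (u v : ι → R) (t : R) :
    (u + t • v) ⬝ᵥ W *ᵥ (u + t • v) =
      u ⬝ᵥ W *ᵥ u + 2 * t * (v ⬝ᵥ W *ᵥ u) + t ^ 2 * (v ⬝ᵥ W *ᵥ v) := by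
  simp only [mulVec_add, mulVec_smul, dotProduct_add, add_dotProduct, smul_dotProduct,
    dotProduct_smul, smul_eq_mul]
  linear_combination t * hW.dotProduct_mulVec_comm u v

theorem Matrix.PosDef.neg_half_dotProduct_inv_mulVec_le {ι : Type*} [Fintype ι] [DecidableEq ι]
    {H : Matrix ι ι ℝ} (hH : H.PosDef) (u d : ι → ℝ) :
    -(1 / 2) * (u ⬝ᵥ H⁻¹ *ᵥ u) ≤ 1 / 2 * (d ⬝ᵥ H *ᵥ d) + u ⬝ᵥ d := by
  have hHinv : H *ᵥ (H⁻¹ *ᵥ u) = u := by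
    rw [mulVec_mulVec, mul_nonsing_inv _ hH.det_pos.ne'.isUnit, one_mulVec]
  have hsymm : H.IsSymm := hH.isHermitian
  have hnonneg := hH.posSemidef.dotProduct_mulVec_nonneg (d + H⁻¹ *ᵥ u)
  simp only [star_trivial, mulVec_add, dotProduct_add, add_dotProduct] at hnonneg
  rw [hsymm.dotProduct_mulVec_comm (H⁻¹ *ᵥ u) d, hHinv, dotProduct_comm (H⁻¹ *ᵥ u)] at hnonneg
  linarith [dotProduct_comm u d]

theorem sum_abs_add_single_sub {ι : Type*} [Fintype ι] [DecidableEq ι] (γ : ι → ℝ) (i : ι)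
    (t : ℝ) : ∑ j, |(γ + Pi.single i t : ι → ℝ) j| - ∑ j, |γ j| = |γ i + t| - |γ i| := by
  rw [← Finset.sum_sub_distrib, Fintype.sum_eq_single i fun j hj => by simp [hj]]
  simp

section Subproblems

variable {n m : ℕ} {G : Matrix (Fin n) (Fin m) ℝ} {b : Fin m → ℝ} {W : Matrix (Fin n) (Fin n) ℝ}
  {δ : ℝ}

/-- The minimiser over `d` of the Lagrangian term `½ dᵀHd + (Gω + γ)ᵀd`, where `W = H⁻¹`. -/
def primalOfDual (G : Matrix (Fin n) (Fin m) ℝ) (W : Matrix (Fin n) (Fin n) ℝ)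
    (ω : Fin m → ℝ) (γ : Fin n → ℝ) : Fin n → ℝ :=
  -(W *ᵥ (G *ᵥ ω + γ))

theorem dualObj_add_smul (hW : W.IsSymm) (ω Δω : Fin m → ℝ) (γ Δγ : Fin n → ℝ) (t : ℝ) :
    dualObj n m G b W δ (ω + t • Δω) (γ + t • Δγ) = dualObj n m G b W δ ω γ
      + t * (b ⬝ᵥ Δω + (G *ᵥ Δω + Δγ) ⬝ᵥ primalOfDual G W ω γ)
      - t ^ 2 / 2 * ((G *ᵥ Δω + Δγ) ⬝ᵥ W *ᵥ (G *ᵥ Δω + Δγ))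
      - δ * (∑ i, |(γ + t • Δγ) i| - ∑ i, |γ i|) := by
  have hu : G *ᵥ (ω + t • Δω) + (γ + t • Δγ) = (G *ᵥ ω + γ) + t • (G *ᵥ Δω + Δγ) := by
    rw [mulVec_add, mulVec_smul, smul_add]; abel
  simp only [dualObj, primalOfDual, hu, hW.dotProduct_mulVec_add_smul, dotProduct_add,
    dotProduct_smul, smul_eq_mul, dotProduct_neg]
  ring

theorem abs_le_and_mul_eq_of_forall_dualObj_le (hW : W.IsSymm) (hδ : 0 ≤ δ)
    {ω : Fin m → ℝ} {γ : Fin n → ℝ}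
    (hopt : ∀ γ', dualObj n m G b W δ ω γ' ≤ dualObj n m G b W δ ω γ) (i : Fin n) :
    |primalOfDual G W ω γ i| ≤ δ ∧ γ i * primalOfDual G W ω γ i = δ * |γ i| := by
  refine abs_le_and_mul_eq_of_forall_mul_sub_le_sq hδ (C := W i i / 2) fun t => ?_
  have hsingle : t • Pi.single i (1 : ℝ) = Pi.single i t := by
    rw [← Pi.single_smul', smul_eq_mul, mul_one]
  have h := hopt (γ + t • Pi.single i 1)
  have e := dualObj_add_smul (G := G) (b := b) (δ := δ) hW ω 0 γ (Pi.single i 1) t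
  rw [smul_zero, add_zero] at e
  rw [e, hsingle, sum_abs_add_single_sub] at h
  simp only [mulVec_zero, dotProduct_zero, zero_add, single_one_dotProduct, mulVec_single_one,
    col_apply] at h
  linarith

theorem dualFeas_iff_mem_stdSimplex {ω : Fin m → ℝ} : dualFeas m ω ↔ ω ∈ stdSimplex ℝ (Fin m) :=
  and_comm

theorem primalFeas_primalOfDual (hW : W.IsSymm) {ω : Fin m → ℝ} {γ : Fin n → ℝ}
    (hω : dualFeas m ω)
    (hopt : ∀ ω', dualFeas m ω' → dualObj n m G b W δ ω' γ ≤ dualObj n m G b W δ ω γ)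
    (hd : ∀ i, |primalOfDual G W ω γ i| ≤ δ) :
    primalFeas n m G b δ (primalOfDual G W ω γ)
      (b ⬝ᵥ ω + (G *ᵥ ω) ⬝ᵥ primalOfDual G W ω γ) := by
  refine ⟨hd, fun j => ?_⟩
  have key : b ⬝ᵥ (Pi.single j 1 - ω) + (G *ᵥ (Pi.single j 1 - ω)) ⬝ᵥ primalOfDual G W ω γ ≤ 0 :=
    nonpos_of_eventually_mul_le_sq
      (B := (G *ᵥ (Pi.single j 1 - ω)) ⬝ᵥ W *ᵥ (G *ᵥ (Pi.single j 1 - ω)) / 2) <| by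
      filter_upwards [Ioo_mem_nhdsGT one_pos] with t ⟨ht0, ht1⟩
      have hmem := (convex_stdSimplex ℝ (Fin m)).add_smul_sub_mem
        (dualFeas_iff_mem_stdSimplex.1 hω) (single_mem_stdSimplex ℝ j) ⟨ht0.le, ht1.le⟩
      have h := hopt _ (dualFeas_iff_mem_stdSimplex.2 hmem)
      have e := dualObj_add_smul (G := G) (b := b) (δ := δ) hW ω (Pi.single j 1 - ω) γ 0 t
      rw [smul_zero, add_zero] at e
      rw [e] at h
      simp only [add_zero, sub_self, mul_zero, sub_zero] at h
      linarith
  rw [dotProduct_sub, mulVec_sub, sub_dotProduct, mulVec_single_one, dotProduct_single_one] at key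
  change b j + G.col j ⬝ᵥ _ ≤ _
  linarith

theorem primalObj_primalOfDual {H : Matrix (Fin n) (Fin n) ℝ} (hHW : H * W = 1)
    {ω : Fin m → ℝ} {γ : Fin n → ℝ} (hγ : ∀ i, γ i * primalOfDual G W ω γ i = δ * |γ i|) :
    primalObj n H (primalOfDual G W ω γ) (b ⬝ᵥ ω + (G *ᵥ ω) ⬝ᵥ primalOfDual G W ω γ) =
      dualObj n m G b W δ ω γ := by
  have hHd : H *ᵥ primalOfDual G W ω γ = -(G *ᵥ ω + γ) := by
    rw [primalOfDual, mulVec_neg, mulVec_mulVec, hHW, one_mulVec]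
  have hsplit : (G *ᵥ ω) ⬝ᵥ primalOfDual G W ω γ =
      (G *ᵥ ω + γ) ⬝ᵥ primalOfDual G W ω γ - γ ⬝ᵥ primalOfDual G W ω γ := by
    rw [add_dotProduct]; ring
  have hγd : γ ⬝ᵥ primalOfDual G W ω γ = δ * ∑ i, |γ i| := by
    rw [Finset.mul_sum]; exact Finset.sum_congr rfl fun i _ => hγ i
  rw [primalObj, hHd, hsplit, hγd]
  simp only [primalOfDual, dotProduct_neg, neg_dotProduct, dualObj]
  rw [dotProduct_comm (W *ᵥ _)]
  ring

theorem dotProduct_add_mulVec_dotProduct_le {ω : Fin m → ℝ} {d : Fin n → ℝ} {z : ℝ}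
    (hp : primalFeas n m G b δ d z) (hω : dualFeas m ω) : b ⬝ᵥ ω + (G *ᵥ ω) ⬝ᵥ d ≤ z := by
  calc b ⬝ᵥ ω + (G *ᵥ ω) ⬝ᵥ d = ∑ j, ω j * (b j + (fun i => G i j) ⬝ᵥ d) := by
        simp only [dotProduct, mulVec, mul_add, Finset.sum_add_distrib, Finset.mul_sum,
          Finset.sum_mul]
        congr 1
        · exact Finset.sum_congr rfl fun _ _ => mul_comm _ _
        · rw [Finset.sum_comm]
          exact Finset.sum_congr rfl fun _ _ => Finset.sum_congr rfl fun _ _ => by ring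
    _ ≤ ∑ j, ω j * z := Finset.sum_le_sum fun j _ => mul_le_mul_of_nonneg_left (hp.2 j) (hω.2 j)
    _ = z := by rw [← Finset.sum_mul, hω.1, one_mul]

theorem dualObj_add_sum_le_primalObj {H : Matrix (Fin n) (Fin n) ℝ} (hH : H.PosDef)
    {ω : Fin m → ℝ} {d : Fin n → ℝ} {z : ℝ} (hp : primalFeas n m G b δ d z)
    (hω : dualFeas m ω) (γ : Fin n → ℝ) :
    dualObj n m G b H⁻¹ δ ω γ + ∑ i, (δ - |d i|) * |γ i| ≤ primalObj n H d z := by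
  have hquad := hH.neg_half_dotProduct_inv_mulVec_le (G *ᵥ ω + γ) d
  have hlin := dotProduct_add_mulVec_dotProduct_le hp hω
  have habs : γ ⬝ᵥ d ≤ ∑ i, |d i| * |γ i| :=
    Finset.sum_le_sum fun i _ => by rw [← abs_mul, mul_comm]; exact le_abs_self _
  simp only [dualObj, primalObj, add_dotProduct, sub_mul, Finset.sum_sub_distrib,
    Finset.mul_sum] at hquad ⊢
  linarith

end Subproblems

theorem eq_zero_of_sum_mul_abs_nonpos {ι : Type*} [Fintype ι] {c γ : ι → ℝ} (hc : ∀ i, 0 < c i)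
    (h : ∑ i, c i * |γ i| ≤ 0) : γ = 0 := by
  have hnonneg : ∀ i ∈ Finset.univ, 0 ≤ c i * |γ i| := fun i _ => by have := hc i; positivity
  funext i
  have := (Finset.sum_eq_zero_iff_of_nonneg hnonneg).1 (le_antisymm h (Finset.sum_nonneg hnonneg)) i
    (Finset.mem_univ i)
  simpa [(hc i).ne'] using this

theorem stmt9_general (n m : ℕ)
    (G : Matrix (Fin n) (Fin m) ℝ) (b : Fin m → ℝ)
    (H W : Matrix (Fin n) (Fin n) ℝ) (hH : H.PosDef) (hW : W = H⁻¹)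
    (δ : ℝ) (hδ : 0 < δ)
    (dstar : Fin n → ℝ) (zstar : ℝ)
    (hpfeas : primalFeas n m G b δ dstar zstar)
    (hpopt : ∀ (d : Fin n → ℝ) (z : ℝ), primalFeas n m G b δ d z →
      primalObj n H dstar zstar ≤ primalObj n H d z)
    (hinactive : ∀ i, |dstar i| < δ) :
    ∀ (ω : Fin m → ℝ) (γ : Fin n → ℝ), dualFeas m ω →
      (∀ (ω' : Fin m → ℝ) (γ' : Fin n → ℝ), dualFeas m ω' →
        dualObj n m G b W δ ω' γ' ≤ dualObj n m G b W δ ω γ) →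
      γ = 0 := by
  intro ω γ hω hopt
  subst hW
  have hsymm : (H⁻¹).IsSymm := hH.inv.isHermitian
  have hsub := abs_le_and_mul_eq_of_forall_dualObj_le hsymm hδ.le fun γ' => hopt ω γ' hω
  have hfeas := primalFeas_primalOfDual hsymm hω (fun ω' hω' => hopt ω' γ hω')
    fun i => (hsub i).1
  have hval := primalObj_primalOfDual (b := b) (mul_nonsing_inv H hH.det_pos.ne'.isUnit)
    fun i => (hsub i).2
  have hslack := dualObj_add_sum_le_primalObj hH hpfeas hω γ
  refine eq_zero_of_sum_mul_abs_nonpos (fun i => sub_pos.2 (hinactive i)) ?_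
  linarith [hpopt _ _ hfeas]

/-- if the optimal solution `(d*, z*)` of the primal subproblem has the
trust-region constraint inactive (`‖d*‖_∞ < δ`), then every optimal solution `(ω, γ)` of
the dual subproblem has `γ = 0`. -/
theorem stmt9 (n m : ℕ) [NeZero n] [NeZero m]
    (G : Matrix (Fin n) (Fin m) ℝ) (b : Fin m → ℝ)
    (H W : Matrix (Fin n) (Fin n) ℝ) (hH : H.PosDef) (hW : W = H⁻¹)
    (δ : ℝ) (hδ : 0 < δ)
    (dstar : Fin n → ℝ) (zstar : ℝ)
    (hpfeas : primalFeas n m G b δ dstar zstar)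
    (hpopt : ∀ (d : Fin n → ℝ) (z : ℝ), primalFeas n m G b δ d z →
      primalObj n H dstar zstar ≤ primalObj n H d z)
    (hinactive : ∀ i, |dstar i| < δ) :
    ∀ (ω : Fin m → ℝ) (γ : Fin n → ℝ), dualFeas m ω →
      (∀ (ω' : Fin m → ℝ) (γ' : Fin n → ℝ), dualFeas m ω' →
        dualObj n m G b W δ ω' γ' ≤ dualObj n m G b W δ ω γ) →
      γ = 0 :=
  stmt9_general n m G b H W hH hW δ hδ dstar zstar hpfeas hpopt hinactive
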